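/- Let H ∈ ℝ^{n×n} be a constant matrix and define φ(H)(x) = diag(x)(Hx − (xᵀHx)𝟏). Then φ(H)(x) = 0 for every x ∈ ℝⁿ with xᵀ𝟏 = 1 if and only if there exists a vector v ∈ ℝⁿ such that H = 𝟏 vᵀ. -/

import Mathlib

/-!
If `H = 𝟏 vᵀ` then `Hx = (vᵀx) 𝟏` has all entries equal, and on the hyperplane `xᵀ𝟏 = 1`
this common value is `xᵀHx`, so `φ(H)` vanishes there. Conversely, at a point `x = a eᵢ + b eⱼ`
with `a + b = 1` and `a, b ≠ 0`, the vanishing of `φ(H)(x)` in coordinates `i` and `j` forces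
`(Hx)ᵢ = xᵀHx = (Hx)ⱼ`; two such points, `(a, b) = (2, -1)` and `(-1, 2)`, already give
`Hᵢⱼ = Hⱼⱼ`, i.e. every column of `H` is constant.
-/

open Matrix

variable {ι K : Type*} [Fintype ι]

def replicatorField [CommRing K] (H : Matrix ι ι K) (x : ι → K) : ι → K :=
  fun i => x i * ((H *ᵥ x) i - x ⬝ᵥ (H *ᵥ x))

section CommRing

variable [CommRing K]

theorem replicatorField_vecMulVec_one {v x : ι → K} (hx : ∑ i, x i = 1) :
    replicatorField (vecMulVec (fun _ => 1) v) x = 0 := by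
  have hHx : vecMulVec (fun _ : ι => (1 : K)) v *ᵥ x = fun _ => v ⬝ᵥ x := by
    rw [vecMulVec_mulVec]
    ext
    simp
  ext i
  simp only [replicatorField, hHx, dotProduct, ← Finset.sum_mul, hx, Pi.zero_apply]
  ring

theorem mulVec_apply_eq_of_replicatorField_eq_zero {H : Matrix ι ι K} {x : ι → K} {i : ι}
    (hφ : replicatorField H x i = 0) (hxi : IsUnit (x i)) :
    (H *ᵥ x) i = x ⬝ᵥ (H *ᵥ x) :=
  sub_eq_zero.mp ((hxi.mul_right_eq_zero).mp hφ)

theorem mulVec_two_point_eq_of_replicatorField_eq_zero [DecidableEq ι] {H : Matrix ι ι K}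
    (hφ : ∀ x : ι → K, ∑ i, x i = 1 → replicatorField H x = 0)
    {i j : ι} (hij : i ≠ j) {a b : K} (hab : a + b = 1) (ha : IsUnit a) (hb : IsUnit b) :
    a * H i i + b * H i j = a * H j i + b * H j j := by
  set x : ι → K := Pi.single i a + Pi.single j b
  have hsum : ∑ k, x k = 1 := by simp [x, Finset.sum_add_distrib, hab]
  have hHx (k : ι) : (H *ᵥ x) k = a * H k i + b * H k j := by simp [x, mulVec_add]
  have hxi : x i = a := by simp [x, hij]
  have hxj : x j = b := by simp [x, hij.symm]
  have ei := mulVec_apply_eq_of_replicatorField_eq_zero (congrFun (hφ x hsum) i) (hxi ▸ ha)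
  have ej := mulVec_apply_eq_of_replicatorField_eq_zero (congrFun (hφ x hsum) j) (hxj ▸ hb)
  rw [← hHx, ← hHx, ei, ej]

end CommRing

theorem apply_eq_diag_of_replicatorField_eq_zero [DecidableEq ι] [Field K] [CharZero K]
    {H : Matrix ι ι K} (hφ : ∀ x : ι → K, ∑ i, x i = 1 → replicatorField H x = 0) (i j : ι) :
    H i j = H j j := by
  obtain rfl | hij := eq_or_ne i j
  · rfl
  have unit_two : IsUnit (2 : K) := isUnit_iff_ne_zero.mpr two_ne_zero
  have unit_neg_one : IsUnit (-1 : K) := isUnit_one.neg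
  have h₁ :=
    mulVec_two_point_eq_of_replicatorField_eq_zero hφ hij (by norm_num) unit_two unit_neg_one
  have h₂ :=
    mulVec_two_point_eq_of_replicatorField_eq_zero hφ hij (by norm_num) unit_neg_one unit_two
  have h₃ : (3 : K) * (H i j - H j j) = 0 := by linear_combination h₁ + 2 * h₂
  simpa [sub_eq_zero] using h₃

/-- **Appendix A (nullspace of `φ`).**  For a constant matrix `H`, the replicator
vector field `φ(H)(x) = diag(x)(Hx − (xᵀHx)𝟏)` vanishes for every `x` with
`xᵀ𝟏 = 1` if and only if `H = 𝟏 vᵀ` for some vector `v`. -/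
theorem nullspace_of_phi
    (n : ℕ) (H : Matrix (Fin n) (Fin n) ℝ) :
    (∀ x : Fin n → ℝ, ∑ i, x i = 1 →
      ∀ i, x i * ((H *ᵥ x) i - x ⬝ᵥ (H *ᵥ x)) = 0)
    ↔ ∃ v : Fin n → ℝ, H = vecMulVec (fun _ => 1) v := by
  constructor
  · intro h
    have hφ (x : Fin n → ℝ) (hx : ∑ i, x i = 1) : replicatorField H x = 0 := funext (h x hx)
    refine ⟨fun j => H j j, ?_⟩
    ext i j
    simpa [vecMulVec_apply] using apply_eq_diag_of_replicatorField_eq_zero hφ i j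
  · rintro ⟨v, rfl⟩ x hx i
    exact congrFun (replicatorField_vecMulVec_one hx) i
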